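/- (Main theorem) For a finite forbidden set F ⊆ Σ^(h,w), a block b with height ≥ h and width ≥ w contains no element of F as a subblock if and only if: every (height(b) × w)-subblock of b is generated by a path in the row-wise presentation G_r(S) and every (h × width(b))-subblock of b is generated by a path in the column-wise presentation G_c(S). -/
import Mathlib


abbrev Block (α : Type*) (m n : ℕ) := Fin m → Fin n → α

def window {α : Type*} {m n : ℕ} (b : Block α m n) (h w k l : ℕ)
    (hk : k + h ≤ m) (hl : l + w ≤ n) : Block α h w :=
  fun p q => b ⟨k + p.val, by omega⟩ ⟨l + q.val, by omega⟩

def IsSubblock {α : Type*} {m' n' m n : ℕ} (b' : Block α m' n') (b : Block α m n) : Prop :=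
  ∃ (k l : ℕ) (hk : k + m' ≤ m) (hl : l + n' ≤ n), b' = window b m' n' k l hk hl

def hcat {α : Type*} {m n n' : ℕ} (x : Block α m n) (y : Block α m n') : Block α m (n + n') :=
  fun i j => if h : (j : ℕ) < n then x i ⟨j, h⟩ else y i ⟨(j : ℕ) - n, by omega⟩

def vcat {α : Type*} {m m' n : ℕ} (x : Block α m n) (y : Block α m' n) : Block α (m + m') n :=
  fun i j => if h : (i : ℕ) < m then x ⟨i, h⟩ j else y ⟨(i : ℕ) - m, by omega⟩ j

def pic {α : Type*} {m n : ℕ} (b : Block α m n) : Block α m (n - 1) :=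
  fun i j => b i ⟨j, by omega⟩

def sigc {α : Type*} {m n : ℕ} (b : Block α m n) : Block α m (n - 1) :=
  fun i j => b i ⟨(j : ℕ) + 1, by omega⟩

def pir {α : Type*} {m n : ℕ} (b : Block α m n) : Block α (m - 1) n :=
  fun i j => b ⟨i, by omega⟩ j

def sigr {α : Type*} {m n : ℕ} (b : Block α m n) : Block α (m - 1) n :=
  fun i j => b ⟨(i : ℕ) + 1, by omega⟩ j

def rowEdge {α : Type*} {h w : ℕ} (u v : Block α h w) : Prop := sigr u = pir v
def colEdge {α : Type*} {h w : ℕ} (u v : Block α h w) : Prop := sigc u = pic v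

theorem main_graph_representation {α : Type*} {h w m n : ℕ}
    (F : Set (Block α h w)) (hF : F.Finite)
    (b : Block α m n) (hm : h ≤ m) (hn : w ≤ n) :
    (∀ f ∈ F, ¬ IsSubblock f b) ↔
      ((∀ (l : ℕ) (hl : l + w ≤ n),
        ∃ u : Fin (m - h + 1) → Block α h w,
          (∀ i, u i ∉ F) ∧
          (∀ i : Fin (m - h), rowEdge (u i.castSucc) (u i.succ)) ∧
          ∀ i : Fin (m - h + 1), u i = window b h w (i : ℕ) l (by omega) hl) ∧
       (∀ (k : ℕ) (hk : k + h ≤ m),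
        ∃ v : Fin (n - w + 1) → Block α h w,
          (∀ j, v j ∉ F) ∧
          (∀ j : Fin (n - w), colEdge (v j.castSucc) (v j.succ)) ∧
          ∀ j : Fin (n - w + 1), v j = window b h w k (j : ℕ) hk (by omega))) := by
  constructor
  · intro hnf
    constructor
    · intro l hl
      refine ⟨fun i => window b h w (i : ℕ) l (by omega) hl, ?_, ?_, fun i => rfl⟩
      · intro i hmem
        exact hnf _ hmem ⟨(i : ℕ), l, by omega, hl, rfl⟩
      · intro i
        funext p q
        simp only [rowEdge, sigr, pir, window, Fin.coe_castSucc, Fin.val_succ]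
        congr 1
        exact Fin.ext (by simp only [Fin.val_mk]; omega)
    · intro k hk
      refine ⟨fun j => window b h w k (j : ℕ) hk (by omega), ?_, ?_, fun j => rfl⟩
      · intro j hmem
        exact hnf _ hmem ⟨k, (j : ℕ), hk, by omega, rfl⟩
      · intro j
        funext p q
        simp only [colEdge, sigc, pic, window, Fin.coe_castSucc, Fin.val_succ]
        congr 1
        exact Fin.ext (by simp only [Fin.val_mk]; omega)
  · rintro ⟨h1, _⟩ f hf ⟨k, l, hk, hl, rfl⟩
    obtain ⟨u, hu, _, hval⟩ := h1 l hl
    have := hval ⟨k, by omega⟩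
    exact hu ⟨k, by omega⟩ (this ▸ hf)
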